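/- arXiv:2207.03106 — 5 statements merged into one kernel-verified Lean document; each statement's English description precedes it below -/
import Mathlib

section
/- Let A be a real symmetric positive definite d×d matrix, B a real symmetric positive semidefinite d×d matrix, and α > 0. If det(A + B) ≤ (1 + α)·det(A), then B ⪯ α·A, i.e., for every x ∈ ℝ^d, xᵀBx ≤ α·xᵀAx. -/
/-!
With `S = √A`, the matrix `N = S⁻¹ (A + B) S⁻¹` satisfies `1 ⪯ N` and `det N ≤ 1 + α`.
Every eigenvalue of `N` is then at least `1`, hence at most the product of all of them,
`det N ≤ 1 + α`; so `N ⪯ (1 + α) • 1`, and conjugating back by `S` gives `A + B ⪯ (1 + α) • A`.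
-/

open Matrix
open scoped MatrixOrder

namespace Matrix

variable {n : Type*} [Fintype n] [DecidableEq n]

theorem le_smul_one_of_one_le_of_det_le {N : Matrix n n ℝ} {c : ℝ} (hN : 1 ≤ N)
    (hdet : N.det ≤ c) : N ≤ c • 1 := by
  have hH : N.IsHermitian := by simpa using hN.isHermitian.add isHermitian_one
  have one_le_eigenvalues : ∀ i, 1 ≤ hH.eigenvalues i := fun i =>
    (algebraMap_le_iff_le_spectrum (r := (1 : ℝ)) hH.isSelfAdjoint).1 (by simpa using hN) _
      (hH.eigenvalues_mem_spectrum_real i)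
  rw [← Algebra.algebraMap_eq_smul_one]
  refine le_algebraMap_of_spectrum_le (fun x hx => ?_) hH.isSelfAdjoint
  obtain ⟨i, rfl⟩ := hH.spectrum_real_eq_range_eigenvalues ▸ hx
  calc hH.eigenvalues i = ∏ j ∈ {i}, hH.eigenvalues j := by simp
    _ ≤ ∏ j, hH.eigenvalues j := Finset.prod_le_prod_of_subset_of_one_le (by simp)
        (fun j _ => zero_le_one.trans (one_le_eigenvalues j)) fun j _ _ => one_le_eigenvalues j
    _ = N.det := by simpa using hH.det_eq_prod_eigenvalues.symm
    _ ≤ c := hdet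

theorem PosDef.le_smul_of_le_of_det_le {A P : Matrix n n ℝ} {c : ℝ} (hA : A.PosDef)
    (hAP : A ≤ P) (hdet : P.det ≤ c * A.det) : P ≤ c • A := by
  set S := CFC.sqrt A
  have hS : IsSelfAdjoint S := (CFC.sqrt_nonneg A).isSelfAdjoint
  have hSS : S * S = A := CFC.sqrt_mul_sqrt_self A hA.posSemidef.nonneg
  have hSdet : IsUnit S.det := (isUnit_iff_isUnit_det S).1 <|
    CFC.isUnit_sqrt_iff_isStrictlyPositive.2 hA.isStrictlyPositive
  have hST : S * S⁻¹ = 1 := mul_nonsing_inv S hSdet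
  have hTS : S⁻¹ * S = 1 := nonsing_inv_mul S hSdet
  have one_le : 1 ≤ S⁻¹ * P * S⁻¹ := calc
    1 = S⁻¹ * A * S⁻¹ := by rw [← hSS, ← mul_assoc, hTS, one_mul, hST]
    _ ≤ S⁻¹ * P * S⁻¹ := IsSelfAdjoint.conjugate_le_conjugate hAP (IsHermitian.inv hS)
  have det_le : (S⁻¹ * P * S⁻¹).det ≤ c := by
    rw [← hSS, det_mul] at hdet
    calc (S⁻¹ * P * S⁻¹).det = P.det / (S.det * S.det) := by
          rw [det_mul, det_mul, det_nonsing_inv, Ring.inverse_eq_inv']; field_simp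
      _ ≤ c := (div_le_iff₀ (mul_self_pos.2 hSdet.ne_zero)).2 hdet
  calc P = S * (S⁻¹ * P * S⁻¹) * S := by
        rw [← mul_assoc, ← mul_assoc, hST, one_mul, mul_assoc, hTS, mul_one]
    _ ≤ S * (c • 1) * S :=
        hS.conjugate_le_conjugate (le_smul_one_of_one_le_of_det_le one_le det_le)
    _ = c • A := by rw [mul_smul_one, smul_mul, hSS]

end Matrix

theorem loewner_of_det_le_general {d : ℕ}
    (A B : Matrix (Fin d) (Fin d) ℝ) (α : ℝ)
    (hA : A.PosDef) (hB : B.PosSemidef)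
    (hdet : (A + B).det ≤ (1 + α) * A.det) :
    ∀ x : Fin d → ℝ, x ⬝ᵥ B *ᵥ x ≤ α * (x ⬝ᵥ A *ᵥ x) := by
  have hAB : A + B ≤ (1 + α) • A :=
    hA.le_smul_of_le_of_det_le (le_add_of_nonneg_right hB.nonneg) hdet
  have hBA : B ≤ α • A := by
    rw [add_smul, one_smul] at hAB
    exact le_of_add_le_add_left hAB
  intro x
  have := (le_iff.1 hBA).dotProduct_mulVec_nonneg x
  rwa [sub_mulVec, dotProduct_sub, smul_mulVec, dotProduct_smul, smul_eq_mul, sub_nonneg] at this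

/-- If `det (A + B) ≤ (1 + α) det A` for positive definite `A` and positive
semidefinite `B`, then `B ⪯ α • A`, i.e. `xᵀ B x ≤ α * xᵀ A x` for all `x`. -/
theorem loewner_of_det_le {d : ℕ}
    (A B : Matrix (Fin d) (Fin d) ℝ) (α : ℝ)
    (hA : A.PosDef) (hB : B.PosSemidef) (hα : 0 < α)
    (hdet : (A + B).det ≤ (1 + α) * A.det) :
    ∀ x : Fin d → ℝ, x ⬝ᵥ B *ᵥ x ≤ α * (x ⬝ᵥ A *ᵥ x) :=
  loewner_of_det_le_general A B α hA hB hdet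
end

section
/- For any real symmetric positive semidefinite d×d matrices A, B, and C, it holds that det(A + B + C) + det(A) ≥ det(A + B) + det(A + C). -/
/-!
For positive definite `Y`, the matrix determinant lemma gives
`det (Y + u uᵀ + v vᵀ) + det Y - det (Y + u uᵀ) - det (Y + v vᵀ) = det Y * det G`,
where `G` is the Gram matrix of `u, v` for the inner product `Y⁻¹`; so the inequality holds for
rank-one `B` and `C`. Since it telescopes (apply it at `Y` and at `Y + X₁` to get it for
`X₁ + X₂`), it extends to sums of rank-one matrices, i.e. to all positive semidefinite `B` and `C`.
A positive semidefinite `A` is the limit of the positive definite `A + ε • 1`.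
-/

open Matrix

namespace Matrix

variable {n : Type*} [Fintype n] [DecidableEq n]

theorem det_add_vecMulVec {α : Type*} [CommRing α] {Y : Matrix n n α} (hY : IsUnit Y.det)
    (u v : n → α) : (Y + vecMulVec u v).det = Y.det * (1 + v ⬝ᵥ Y⁻¹ *ᵥ u) := by
  rw [vecMulVec_eq (Fin 1), det_add_replicateCol_mul_replicateRow hY, Matrix.mul_assoc,
    ← replicateCol_mulVec, replicateRow_mul_replicateCol]
  simp

theorem PosDef.det_add_vecMulVec_self_add_det_le {Y : Matrix n n ℝ} (hY : Y.PosDef)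
    (u v : n → ℝ) :
    (Y + vecMulVec u u).det + (Y + vecMulVec v v).det ≤
      (Y + vecMulVec u u + vecMulVec v v).det + Y.det := by
  set V : Matrix (Fin 2) n ℝ := of ![u, v]
  have hGram : (V * Y⁻¹ * Vᵀ).PosSemidef := by
    simpa using hY.inv.posSemidef.mul_mul_conjTranspose_same V
  have hGram_apply (i j : Fin 2) : (V * Y⁻¹ * Vᵀ) i j = V i ⬝ᵥ Y⁻¹ *ᵥ V j := by
    rw [Matrix.mul_assoc, mul_apply']
    rfl
  have hV : vecMulVec u u + vecMulVec v v = Vᵀ * V := by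
    ext i j
    simp [V, mul_apply, Fin.sum_univ_two, vecMulVec_apply]
  have hY_unit : IsUnit Y.det := hY.det_pos.ne'.isUnit
  have hGram_det := hGram.det_nonneg
  rw [add_assoc, hV, det_add_mul _ _ hY_unit, det_add_vecMulVec hY_unit,
    det_add_vecMulVec hY_unit]
  rw [det_fin_two] at hGram_det ⊢
  have hV₀ : V 0 = u := rfl
  have hV₁ : V 1 = v := rfl
  simp only [Matrix.add_apply, hGram_apply, hV₀, hV₁, one_apply_eq, one_apply_ne zero_ne_one,
    one_apply_ne one_ne_zero, zero_add] at hGram_det ⊢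
  linarith [mul_nonneg hY.det_pos.le hGram_det]

theorem det_add_sum_add_det_le {ι : Type*} {s : Finset ι} {X : ι → Matrix n n ℝ}
    (hX : ∀ i ∈ s, (X i).PosSemidef) {Z : Matrix n n ℝ}
    (h : ∀ i ∈ s, ∀ Y : Matrix n n ℝ, Y.PosDef →
      (Y + X i).det + (Y + Z).det ≤ (Y + X i + Z).det + Y.det)
    {Y : Matrix n n ℝ} (hY : Y.PosDef) :
    (Y + ∑ i ∈ s, X i).det + (Y + Z).det ≤ (Y + ∑ i ∈ s, X i + Z).det + Y.det := by
  classical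
  induction s using Finset.induction_on generalizing Y with
  | empty => simp [add_comm]
  | insert j s hj ih =>
    rw [Finset.sum_insert hj, ← add_assoc]
    have hj_step := h j (s.mem_insert_self j) Y hY
    have hs_step := ih (fun i hi ↦ hX i (Finset.mem_insert_of_mem hi))
      (fun i hi ↦ h i (Finset.mem_insert_of_mem hi))
      (hY.add_posSemidef (hX j (s.mem_insert_self j)))
    linarith

theorem PosDef.det_add_vecMulVec_self_add_det_le_of_posSemidef {Y C : Matrix n n ℝ}
    (hY : Y.PosDef) (u : n → ℝ) (hC : C.PosSemidef) :
    (Y + vecMulVec u u).det + (Y + C).det ≤ (Y + vecMulVec u u + C).det + Y.det := by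
  obtain ⟨m, w, rfl⟩ := posSemidef_iff_eq_sum_vecMulVec.mp hC
  have h := det_add_sum_add_det_le (s := .univ)
    (fun i _ ↦ posSemidef_vecMulVec_self_star (w i))
    (fun i _ Y hY ↦ hY.det_add_vecMulVec_self_add_det_le (w i) u) hY
  simp only [star_trivial] at h ⊢
  rw [add_right_comm]
  linarith

theorem PosDef.det_add_add_det_le {Y B C : Matrix n n ℝ} (hY : Y.PosDef) (hB : B.PosSemidef)
    (hC : C.PosSemidef) : (Y + B).det + (Y + C).det ≤ (Y + B + C).det + Y.det := by
  obtain ⟨m, w, rfl⟩ := posSemidef_iff_eq_sum_vecMulVec.mp hB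
  simp only [star_trivial]
  exact det_add_sum_add_det_le (fun i _ ↦ by simpa using posSemidef_vecMulVec_self_star (w i))
    (fun i _ Y hY ↦ hY.det_add_vecMulVec_self_add_det_le_of_posSemidef (w i) hC) hY

end Matrix

/-- Lemma 2.2 of Tie et al.: for positive semidefinite `A`, `B`, `C`,
`det (A + B + C) + det A ≥ det (A + B) + det (A + C)`. -/
theorem det_add_add_add_det_ge {d : ℕ}
    (A B C : Matrix (Fin d) (Fin d) ℝ)
    (hA : A.PosSemidef) (hB : B.PosSemidef) (hC : C.PosSemidef) :
    (A + B).det + (A + C).det ≤ (A + B + C).det + A.det := by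
  set F : ℝ → ℝ := fun ε ↦ (A + ε • 1 + B + C).det + (A + ε • 1).det
    - (A + ε • 1 + B).det - (A + ε • 1 + C).det
  have hF : Continuous F := by fun_prop
  have hF_pos (ε : ℝ) (hε : 0 < ε) : 0 ≤ F ε := by
    have := (PosDef.posSemidef_add hA (PosDef.one.smul hε)).det_add_add_det_le hB hC
    simp only [F]
    linarith
  have hF_zero : 0 ≤ F 0 := ge_of_tendsto ((hF.tendsto 0).mono_left nhdsWithin_le_nhds)
    (eventually_nhdsWithin_of_forall (s := Set.Ioi 0) hF_pos)
  simp only [F, zero_smul, add_zero] at hF_zero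
  linarith
end

section
/- For any real symmetric positive semidefinite d×d matrices A, B, and C, it holds that det(A + B + C) · det(A) ≤ det(A + B) · det(A + C). -/
/-!
If `A` is singular the left side vanishes. Otherwise write `C = Wᴴ W`; the matrix determinant
lemma gives `det (P + C) = det P * det (1 + W P⁻¹ Wᴴ)` for `P = A` and `P = A + B`, so it remains
to see `det (1 + W (A + B)⁻¹ Wᴴ) ≤ det (1 + W A⁻¹ Wᴴ)`. This follows from the antitonicity of
inversion in the Loewner order, `(A + B)⁻¹ ≤ A⁻¹` (read off the Woodbury identity), and the
monotonicity of `det` on positive semidefinite matrices, which is again the determinant lemma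
together with `1 ≤ det (1 + R)` for `R ≥ 0`.
-/

open Matrix
open scoped MatrixOrder

namespace Matrix

variable {n : Type*} [Fintype n] [DecidableEq n]

lemma PosSemidef.one_le_det_one_add {R : Matrix n n ℝ} (hR : R.PosSemidef) :
    1 ≤ (1 + R).det := by
  have h : 1 + R = cfc (fun x : ℝ => 1 + x) R := by
    rw [cfc_const_add _ _ _, cfc_id' ℝ R, map_one]
  rw [h, hR.1.cfc_eq]
  simp only [IsHermitian.cfc, det_map, det_diagonal, Function.comp_apply,
    RCLike.ofReal_real_eq_id, id]
  exact Finset.one_le_prod fun i _ => le_add_of_nonneg_right (hR.eigenvalues_nonneg i)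

lemma PosSemidef.det_le_det {P Q : Matrix n n ℝ} (hP : P.PosSemidef) (hPQ : P ≤ Q) :
    P.det ≤ Q.det := by
  by_cases hP0 : P.det = 0
  · exact hP0 ▸ (hP.nonneg.trans hPQ).posSemidef.det_nonneg
  have hP' : P.PosDef := hP.posDef_iff_det_ne_zero.mpr hP0
  obtain ⟨V, hV⟩ := CStarAlgebra.nonneg_iff_eq_star_mul_self.mp (sub_nonneg.mpr hPQ)
  rw [← add_sub_cancel P Q, hV, det_add_mul _ _ (isUnit_iff_ne_zero.mpr hP0)]
  exact le_mul_of_one_le_right hP.det_nonneg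
    (hP'.inv.posSemidef.mul_mul_conjTranspose_same V).one_le_det_one_add

lemma PosDef.inv_add_le_inv {A B : Matrix n n ℝ} (hA : A.PosDef) (hB : B.PosSemidef) :
    (A + B)⁻¹ ≤ A⁻¹ := by
  obtain ⟨V, rfl⟩ := CStarAlgebra.nonneg_iff_eq_star_mul_self.mp hB.nonneg
  have hM : (1 + V * A⁻¹ * star V).PosDef :=
    PosDef.one.add_posSemidef (hA.inv.posSemidef.mul_mul_conjTranspose_same V)
  have woodbury :=
    add_mul_mul_inv_eq_sub A (star V) 1 V hA.isUnit isUnit_one (by simpa using hM.isUnit)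
  rw [Matrix.mul_one, inv_one] at woodbury
  rw [← sub_nonneg, woodbury, sub_sub_cancel]
  simpa only [star_mul, hA.isHermitian.inv.isSelfAdjoint.star_eq, Matrix.mul_assoc]
    using star_left_conjugate_nonneg hM.inv.posSemidef.nonneg (V * A⁻¹)

end Matrix

/-- Lemma 2.3 of Tie et al.: for positive semidefinite `A`, `B`, `C`,
`det (A + B + C) * det A ≤ det (A + B) * det (A + C)`. -/
theorem det_add_add_mul_det_le {d : ℕ}
    (A B C : Matrix (Fin d) (Fin d) ℝ)
    (hA : A.PosSemidef) (hB : B.PosSemidef) (hC : C.PosSemidef) :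
    (A + B + C).det * A.det ≤ (A + B).det * (A + C).det := by
  by_cases hA0 : A.det = 0
  · rw [hA0, mul_zero]
    exact mul_nonneg (hA.add hB).det_nonneg (hA.add hC).det_nonneg
  have hA' : A.PosDef := hA.posDef_iff_det_ne_zero.mpr hA0
  have hAB : (A + B).PosDef := hA'.add_posSemidef hB
  obtain ⟨W, rfl⟩ := CStarAlgebra.nonneg_iff_eq_star_mul_self.mp hC.nonneg
  have hle : 1 + W * (A + B)⁻¹ * star W ≤ 1 + W * A⁻¹ * star W :=
    add_le_add_right (star_right_conjugate_le_conjugate (hA'.inv_add_le_inv hB) W) 1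
  have hdet := (PosDef.one.add_posSemidef
    (hAB.inv.posSemidef.mul_mul_conjTranspose_same W)).posSemidef.det_le_det hle
  rw [det_add_mul _ _ (isUnit_iff_ne_zero.mpr hAB.det_pos.ne'),
    det_add_mul _ _ (isUnit_iff_ne_zero.mpr hA0)]
  calc (A + B).det * (1 + W * (A + B)⁻¹ * star W).det * A.det
      = (A + B).det * A.det * (1 + W * (A + B)⁻¹ * star W).det := by ring
    _ ≤ (A + B).det * A.det * (1 + W * A⁻¹ * star W).det :=
      mul_le_mul_of_nonneg_left hdet (mul_nonneg hAB.posSemidef.det_nonneg hA.det_nonneg)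
    _ = (A + B).det * (A.det * (1 + W * A⁻¹ * star W).det) := by ring
end

section
/- Let Σ be a real symmetric positive definite d×d matrix, β ≥ 0, and θ̂, θ* ∈ ℝ^d with ‖θ̂ − θ*‖_Σ ≤ β. Let D ⊂ ℝ^d be a nonempty finite set and let x₀ ∈ D be a maximizer of x ↦ ⟨θ̂, x⟩ + β·√(xᵀΣ^{−1}x) over D. Then max_{x ∈ D} ⟨θ*, x⟩ − ⟨θ*, x₀⟩ ≤ 2β·√(x₀ᵀΣ^{−1}x₀). -/
/-!
Write `v = θ̂ - θ*`. Since `v ⬝ᵥ x = v ⬝ᵥ Σ (Σ⁻¹ x)`, Cauchy–Schwarz for the inner product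
induced by `Σ` gives `|v ⬝ᵥ x| ≤ ‖v‖_Σ ‖x‖_{Σ⁻¹} ≤ β ‖x‖_{Σ⁻¹}`: the exploration bonus bounds the
estimation error of every action. Hence `θ* ⬝ᵥ x ≤ UCB(x) ≤ UCB(x₀) ≤ θ* ⬝ᵥ x₀ + 2 β ‖x₀‖_{Σ⁻¹}`.
-/

open Matrix

theorem Matrix.PosSemidef.abs_dotProduct_mulVec_le {n : Type*} [Fintype n]
    {M : Matrix n n ℝ} (hM : M.PosSemidef) (x y : n → ℝ) :
    |x ⬝ᵥ M *ᵥ y| ≤ √(x ⬝ᵥ M *ᵥ x) * √(y ⬝ᵥ M *ᵥ y) := by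
  let := M.toSeminormedAddCommGroup hM
  let := M.toInnerProductSpace hM
  have hinner (u w : n → ℝ) : inner ℝ u w = u ⬝ᵥ M *ᵥ w := by
    rw [dotProduct_comm]; rfl
  simpa only [norm_eq_sqrt_real_inner, hinner] using abs_real_inner_le_norm x y

theorem Matrix.PosDef.abs_dotProduct_le {n : Type*} [Fintype n] [DecidableEq n]
    {M : Matrix n n ℝ} (hM : M.PosDef) (v x : n → ℝ) :
    |v ⬝ᵥ x| ≤ √(v ⬝ᵥ M *ᵥ v) * √(x ⬝ᵥ M⁻¹ *ᵥ x) := by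
  have hcancel : M *ᵥ (M⁻¹ *ᵥ x) = x := by
    rw [mulVec_mulVec, mul_nonsing_inv _ (M.isUnit_iff_isUnit_det.1 hM.isUnit), one_mulVec]
  have hdual : (M⁻¹ *ᵥ x) ⬝ᵥ M *ᵥ (M⁻¹ *ᵥ x) = x ⬝ᵥ M⁻¹ *ᵥ x := by
    rw [hcancel, dotProduct_comm]
  have h := hM.posSemidef.abs_dotProduct_mulVec_le v (M⁻¹ *ᵥ x)
  rwa [hdual, hcancel] at h

theorem sub_le_two_mul_of_abs_sub_le_of_add_le_add {α : Type*} (est val bonus : α → ℝ)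
    (hest : ∀ x, |est x - val x| ≤ bonus x) {x x₀ : α}
    (hmax : est x + bonus x ≤ est x₀ + bonus x₀) :
    val x - val x₀ ≤ 2 * bonus x₀ := by
  have hx := (abs_le.1 (hest x)).1
  have hx₀ := (abs_le.1 (hest x₀)).2
  linarith

theorem ucb_per_round_regret_general {d : ℕ}
    (Sig : Matrix (Fin d) (Fin d) ℝ) (hSig : Sig.PosDef)
    (β : ℝ) (θhat θstar : Fin d → ℝ)
    (hconf : Real.sqrt ((θhat - θstar) ⬝ᵥ Sig *ᵥ (θhat - θstar)) ≤ β)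
    (D : Finset (Fin d → ℝ))
    (x₀ : Fin d → ℝ)
    (hmax : ∀ x ∈ D,
      θhat ⬝ᵥ x + β * Real.sqrt (x ⬝ᵥ Sig⁻¹ *ᵥ x)
        ≤ θhat ⬝ᵥ x₀ + β * Real.sqrt (x₀ ⬝ᵥ Sig⁻¹ *ᵥ x₀)) :
    ∀ x ∈ D, θstar ⬝ᵥ x - θstar ⬝ᵥ x₀ ≤ 2 * β * Real.sqrt (x₀ ⬝ᵥ Sig⁻¹ *ᵥ x₀) := by
  intro x hx
  have hest (y : Fin d → ℝ) :
      |θhat ⬝ᵥ y - θstar ⬝ᵥ y| ≤ β * Real.sqrt (y ⬝ᵥ Sig⁻¹ *ᵥ y) := by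
    rw [← sub_dotProduct]
    exact (hSig.abs_dotProduct_le _ y).trans
      (mul_le_mul_of_nonneg_right hconf (Real.sqrt_nonneg _))
  rw [mul_assoc]
  exact sub_le_two_mul_of_abs_sub_le_of_add_le_add _ _ _ hest (hmax x hx)

/-- Per-round regret of the optimistic action: under the confidence event, the
instantaneous regret of the UCB maximizer `x₀` is at most twice its bonus. -/
theorem ucb_per_round_regret {d : ℕ}
    (Sig : Matrix (Fin d) (Fin d) ℝ) (hSig : Sig.PosDef)
    (β : ℝ) (hβ : 0 ≤ β) (θhat θstar : Fin d → ℝ)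
    (hconf : Real.sqrt ((θhat - θstar) ⬝ᵥ Sig *ᵥ (θhat - θstar)) ≤ β)
    (D : Finset (Fin d → ℝ)) (hD : D.Nonempty)
    (x₀ : Fin d → ℝ) (hx₀ : x₀ ∈ D)
    (hmax : ∀ x ∈ D,
      θhat ⬝ᵥ x + β * Real.sqrt (x ⬝ᵥ Sig⁻¹ *ᵥ x)
        ≤ θhat ⬝ᵥ x₀ + β * Real.sqrt (x₀ ⬝ᵥ Sig⁻¹ *ᵥ x₀)) :
    ∀ x ∈ D, θstar ⬝ᵥ x - θstar ⬝ᵥ x₀ ≤ 2 * β * Real.sqrt (x₀ ⬝ᵥ Sig⁻¹ *ᵥ x₀) :=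
  ucb_per_round_regret_general Sig hSig β θhat θstar hconf D x₀ hmax
end

section
/- Let A and B be real symmetric positive definite d×d matrices with A ⪰ B. Then for every x ∈ ℝ^d: xᵀB^{−1}x ≤ (det(A)/det(B)) · xᵀA^{−1}x. -/
/-!
Conjugating by `S = √B` reduces everything to `M = S⁻¹ A S⁻¹`, which satisfies `1 ≤ M` and
`det M = det A / det B`. Every eigenvalue of `M` is at least `1`, hence at most the product
`det M` of all of them, so `1 ≤ det M • M⁻¹`; conjugating back by `S⁻¹` gives
`B⁻¹ ≤ (det A / det B) • A⁻¹` in the Loewner order, and the quadratic-form inequality is this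
order evaluated at `x`.
-/

open Matrix

section CFC

variable {A : Type*} [PartialOrder A] [Ring A] [StarRing A] [TopologicalSpace A]
  [StarOrderedRing A] [Algebra ℝ A] [ContinuousFunctionalCalculus ℝ A IsSelfAdjoint]
  [NonnegSpectrumClass ℝ A]

lemma CFC.one_le_smul_ringInverse {a : A} {c : ℝ} (ha : 1 ≤ a)
    (hc : ∀ x ∈ spectrum ℝ a, x ≤ c) : 1 ≤ c • Ring.inverse a := by
  have ha_sa : IsSelfAdjoint a := .of_nonneg (zero_le_one.trans ha)
  have hpos : ∀ x ∈ spectrum ℝ a, 0 < x := fun x hx =>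
    zero_lt_one.trans_le ((CFC.one_le_iff a).mp ha x hx)
  have ha_unit : IsUnit a := spectrum.isUnit_of_zero_notMem ℝ fun h0 => (hpos 0 h0).false
  have hinv : ContinuousOn (·⁻¹) (spectrum ℝ a) :=
    continuousOn_inv₀.mono fun x hx => (hpos x hx).ne'
  rw [← cfc_ringInverse_id (R := ℝ) a ha_unit, ← cfc_const_mul c _ a hinv]
  refine (one_le_cfc_iff (fun x => c * x⁻¹) a (continuousOn_const.mul hinv)).mpr fun x hx => ?_
  rw [← div_eq_mul_inv, one_le_div (hpos x hx)]
  exact hc x hx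

end CFC

namespace Matrix

variable {n : Type*} [Fintype n] [DecidableEq n]

lemma IsHermitian.eigenvalues_le_det {M : Matrix n n ℝ} (hM : M.IsHermitian)
    (h1 : ∀ i, 1 ≤ hM.eigenvalues i) (i : n) : hM.eigenvalues i ≤ M.det := by
  rw [hM.det_eq_prod_eigenvalues]
  simpa using Finset.prod_le_prod_of_subset_of_one_le (Finset.subset_univ {i})
    (fun j _ => zero_le_one.trans (h1 j)) (fun j _ _ => h1 j)

open scoped MatrixOrder

lemma one_le_det_smul_inv {M : Matrix n n ℝ} (hM : 1 ≤ M) : 1 ≤ M.det • M⁻¹ := by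
  have hH : M.IsHermitian := (nonneg_iff_posSemidef.mp (zero_le_one.trans hM)).isHermitian
  have h1 : ∀ x ∈ spectrum ℝ M, 1 ≤ x := (CFC.one_le_iff M).mp hM
  rw [nonsing_inv_eq_ringInverse]
  refine CFC.one_le_smul_ringInverse hM fun x hx => ?_
  obtain ⟨i, rfl⟩ := hH.spectrum_real_eq_range_eigenvalues ▸ hx
  exact hH.eigenvalues_le_det (fun j => h1 _ (hH.eigenvalues_mem_spectrum_real j)) i

lemma inv_le_det_div_det_smul_inv {A B : Matrix n n ℝ} (hB : B.PosDef) (hBA : B ≤ A) :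
    B⁻¹ ≤ (A.det / B.det) • A⁻¹ := by
  set S := CFC.sqrt B
  have hSS : S * S = B := CFC.sqrt_mul_sqrt_self B hB.posSemidef.nonneg
  have hS_det : IsUnit S.det := (isUnit_iff_isUnit_det S).mp <|
    (CFC.isUnit_sqrt_iff B hB.posSemidef.nonneg).mpr hB.isUnit
  have hSinv_S : S⁻¹ * S = 1 := nonsing_inv_mul S hS_det
  have hS_Sinv : S * S⁻¹ = 1 := mul_nonsing_inv S hS_det
  have hT : IsSelfAdjoint S⁻¹ :=
    (nonneg_iff_posSemidef.mp (CFC.sqrt_nonneg B)).isHermitian.inv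
  set M := S⁻¹ * A * S⁻¹
  have hM : 1 ≤ M := by
    have hB1 : S⁻¹ * B * S⁻¹ = 1 := by
      rw [← hSS, ← mul_assoc, mul_assoc (S⁻¹ * S), hSinv_S, hS_Sinv, one_mul]
    simpa only [hB1] using hT.conjugate_le_conjugate hBA
  have hBinv : S⁻¹ * 1 * S⁻¹ = B⁻¹ := by rw [mul_one, ← mul_inv_rev, hSS]
  have hAinv : S⁻¹ * M⁻¹ * S⁻¹ = A⁻¹ := by
    rw [mul_inv_rev, mul_inv_rev, nonsing_inv_nonsing_inv S hS_det, ← mul_assoc, ← mul_assoc,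
      hSinv_S, one_mul, mul_assoc, hS_Sinv, mul_one]
  have hdet : M.det = A.det / B.det := by
    rw [← hSS, det_mul, det_mul, det_mul, det_nonsing_inv, Ring.inverse_eq_inv']
    field_simp
  simpa only [hBinv, mul_smul_comm, smul_mul_assoc, hAinv, hdet] using
    hT.conjugate_le_conjugate (one_le_det_smul_inv hM)

end Matrix

theorem inv_quadratic_form_det_ratio_general {d : ℕ}
    (A B : Matrix (Fin d) (Fin d) ℝ)
    (hB : B.PosDef) (hAB : (A - B).PosSemidef) :
    ∀ x : Fin d → ℝ, x ⬝ᵥ B⁻¹ *ᵥ x ≤ (A.det / B.det) * (x ⬝ᵥ A⁻¹ *ᵥ x) := by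
  intro x
  have hLoewner : ((A.det / B.det) • A⁻¹ - B⁻¹).PosSemidef :=
    open scoped MatrixOrder in inv_le_det_div_det_smul_inv hB hAB
  have h := hLoewner.dotProduct_mulVec_nonneg x
  simp only [star_trivial, sub_mulVec, smul_mulVec, dotProduct_sub, dotProduct_smul,
    smul_eq_mul] at h
  linarith

/-- If `A ⪰ B` with `A, B` positive definite, then
`xᵀ B⁻¹ x ≤ (det A / det B) * xᵀ A⁻¹ x` for every `x`. -/
theorem inv_quadratic_form_det_ratio {d : ℕ}
    (A B : Matrix (Fin d) (Fin d) ℝ)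
    (hA : A.PosDef) (hB : B.PosDef) (hAB : (A - B).PosSemidef) :
    ∀ x : Fin d → ℝ, x ⬝ᵥ B⁻¹ *ᵥ x ≤ (A.det / B.det) * (x ⬝ᵥ A⁻¹ *ᵥ x) :=
  inv_quadratic_form_det_ratio_general A B hB hAB
end
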